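/- arXiv:1609.03540 — 7 statements merged into one kernel-verified Lean document; each statement's English description precedes it below -/
import Mathlib

section
/- Let (Ω, ℱ, μ) be a probability space with Ω a finite type and all subsets measurable, let T : Ω → Bool be a treatment indicator, let Y : Ω → γ (the pair of potential outcomes), let X : Ω → χ (the covariates), let f : χ → β, and let B = f ∘ X (a balancing function of the covariates). Assume (strong ignorability given X): for every x with μ {X = x} > 0, under the conditioned measure μ[·|{X = x}] the random variables Y and T are independent (IndepFun), and 0 < μ[{T = true} | {X = x}] < 1. Assume (perfect balance): for every b with μ {B = b} > 0, under the conditioned measure μ[·|{B = b}] the random variables X and T are independent. Then the treatment assignment is strongly ignorable within each group defined by B: for every b with μ {B = b} > 0, under μ[·|{B = b}] the random variables Y and T are independent, and 0 < μ[{T = true} | {B = b}] < 1. -/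
/-!
Within a group `B = b`, balance makes `T` independent of `X`, so conditioning further on
`X = x` does not change the law of `T`; and since `B` is a function of `X`, conditioning the
group on `X = x` is just conditioning on `X = x`. Averaging the factorisation
`P(Y ∈ A, T ∈ C | X = x) = P(Y ∈ A | X = x) P(T ∈ C)` over the values of `X` then gives
independence of `Y` and `T` within the group, and the propensity within the group equals the
propensity at any covariate value the group charges.
-/

open MeasureTheory ProbabilityTheory Finset

namespace ProbabilityTheory

lemma IndepFun.cond_preimage_apply {Ω χ δ : Type*} [MeasurableSpace Ω] [MeasurableSpace χ]
    [MeasurableSpace δ] {ν : Measure Ω} [IsFiniteMeasure ν] {X : Ω → χ} {T : Ω → δ}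
    (hXT : IndepFun X T ν) (hX : Measurable X) {s : Set χ} (hs : MeasurableSet s)
    (hνs : ν (X ⁻¹' s) ≠ 0) {C : Set δ} (hC : MeasurableSet C) :
    ν[T ⁻¹' C | X ⁻¹' s] = ν (T ⁻¹' C) := by
  rw [cond_apply (hX hs), hXT.measure_inter_preimage_eq_mul s C hs hC, ← mul_assoc,
    ENNReal.inv_mul_cancel hνs (measure_ne_top ν _), one_mul]

end ProbabilityTheory

lemma exists_measure_preimage_singleton_ne_zero {Ω χ : Type*} [Countable Ω] [MeasurableSpace Ω]
    {ν : Measure Ω} (hν : ν ≠ 0) (X : Ω → χ) : ∃ x, ν (X ⁻¹' {x}) ≠ 0 := by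
  by_contra! h
  refine Measure.measure_univ_ne_zero.mpr hν ?_
  rw [← Set.preimage_range X]
  exact (measure_preimage_eq_zero_iff_of_countable (Set.countable_range X)).mpr fun x _ => h x

section FiniteSampleSpace

variable {Ω χ : Type*} [Fintype Ω] [MeasurableSpace Ω] [MeasurableSingletonClass Ω]
  {ν : Measure Ω} [IsFiniteMeasure ν]

lemma measure_eq_sum_cond_mul_measure_fiber [DecidableEq χ] (X : Ω → χ) (E : Set Ω) :
    ν E = ∑ x ∈ univ.image X, ν[E | X ⁻¹' {x}] * ν (X ⁻¹' {x}) := by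
  calc ν E = ν.restrict E (X ⁻¹' ↑(univ.image X)) := by
        simp [Measure.restrict_apply .of_discrete]
    _ = ∑ x ∈ univ.image X, ν.restrict E (X ⁻¹' {x}) :=
        (sum_measure_preimage_singleton _ fun _ _ => .of_discrete).symm
    _ = _ := by
        simp_rw [cond_mul_eq_inter .of_discrete, Measure.restrict_apply .of_discrete]

lemma indepFun_of_indepFun_cond_fiber {γ δ : Type*} [MeasurableSpace χ]
    [MeasurableSingletonClass χ] [MeasurableSpace γ] [MeasurableSpace δ]
    {X : Ω → χ} {Y : Ω → γ} {T : Ω → δ} (hXT : IndepFun X T ν)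
    (hYT : ∀ x, ν (X ⁻¹' {x}) ≠ 0 → IndepFun Y T ν[|X ⁻¹' {x}]) : IndepFun Y T ν := by
  classical
  rw [indepFun_iff_measure_inter_preimage_eq_mul]
  intro A C hA hC
  have hfiber : ∀ x, ν[Y ⁻¹' A ∩ T ⁻¹' C | X ⁻¹' {x}] * ν (X ⁻¹' {x})
      = ν[Y ⁻¹' A | X ⁻¹' {x}] * ν (X ⁻¹' {x}) * ν (T ⁻¹' C) := by
    intro x
    rcases eq_or_ne (ν (X ⁻¹' {x})) 0 with hx | hx
    · simp [hx]
    · rw [(hYT x hx).measure_inter_preimage_eq_mul A C hA hC,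
        hXT.cond_preimage_apply .of_discrete (measurableSet_singleton x) hx hC, mul_right_comm]
  calc ν (Y ⁻¹' A ∩ T ⁻¹' C)
      = ∑ x ∈ univ.image X, ν[Y ⁻¹' A ∩ T ⁻¹' C | X ⁻¹' {x}] * ν (X ⁻¹' {x}) :=
        measure_eq_sum_cond_mul_measure_fiber X _
    _ = (∑ x ∈ univ.image X, ν[Y ⁻¹' A | X ⁻¹' {x}] * ν (X ⁻¹' {x})) * ν (T ⁻¹' C) := by
        rw [sum_mul]
        exact sum_congr rfl fun x _ => hfiber x
    _ = ν (Y ⁻¹' A) * ν (T ⁻¹' C) := by rw [← measure_eq_sum_cond_mul_measure_fiber]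

lemma cond_cond_fiber_eq_cond_fiber_and_measure_pos {β : Type*} {X : Ω → χ} {f : χ → β} {b : β}
    {x : χ} (hx : ν[X ⁻¹' {x} | (f ∘ X) ⁻¹' {b}] ≠ 0) :
    ν[|(f ∘ X) ⁻¹' {b}][|X ⁻¹' {x}] = ν[|X ⁻¹' {x}] ∧ 0 < ν (X ⁻¹' {x}) := by
  have hinter := inter_pos_of_cond_ne_zero .of_discrete hx
  obtain ⟨ω, hωb, hωx⟩ := nonempty_of_measure_ne_zero hinter.ne'
  have hsub : X ⁻¹' {x} ⊆ (f ∘ X) ⁻¹' {b} := by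
    intro ω' (hω' : X ω' = x)
    show f (X ω') = b
    rw [hω', ← hωx]
    exact hωb
  refine ⟨?_, hinter.trans_le (measure_mono Set.inter_subset_right)⟩
  rw [cond_cond_eq_cond_inter .of_discrete .of_discrete, Set.inter_eq_right.mpr hsub]

end FiniteSampleSpace

theorem strong_ignorability_within_balanced_groups_general
    {Ω : Type*} [Fintype Ω] [MeasurableSpace Ω] [MeasurableSingletonClass Ω]
    {γ χ β : Type*} [MeasurableSpace γ]
    [MeasurableSpace χ] [MeasurableSingletonClass χ]
    (μ : Measure Ω) [IsProbabilityMeasure μ]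
    (T : Ω → Bool) (Y : Ω → γ) (X : Ω → χ) (f : χ → β)
    (B : Ω → β) (hB : B = f ∘ X)
    (hsi : ∀ x : χ, 0 < μ {ω | X ω = x} →
      IndepFun Y T (μ[|{ω | X ω = x}]) ∧
      0 < (μ[|{ω | X ω = x}]) {ω | T ω = true} ∧
      (μ[|{ω | X ω = x}]) {ω | T ω = true} < 1)
    (hbal : ∀ b : β, 0 < μ {ω | B ω = b} →
      IndepFun X T (μ[|{ω | B ω = b}])) :
    ∀ b : β, 0 < μ {ω | B ω = b} →
      IndepFun Y T (μ[|{ω | B ω = b}]) ∧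
      0 < (μ[|{ω | B ω = b}]) {ω | T ω = true} ∧
      (μ[|{ω | B ω = b}]) {ω | T ω = true} < 1 := by
  intro b hb
  subst hB
  show IndepFun Y T μ[|(f ∘ X) ⁻¹' {b}] ∧ 0 < μ[T ⁻¹' {true} | (f ∘ X) ⁻¹' {b}] ∧
    μ[T ⁻¹' {true} | (f ∘ X) ⁻¹' {b}] < 1
  have : IsProbabilityMeasure μ[|(f ∘ X) ⁻¹' {b}] := cond_isProbabilityMeasure hb.ne'
  have hbalb : IndepFun X T μ[|(f ∘ X) ⁻¹' {b}] := hbal b hb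
  refine ⟨indepFun_of_indepFun_cond_fiber hbalb fun x hx => ?_, ?_⟩
  · obtain ⟨hcond, hpos⟩ := cond_cond_fiber_eq_cond_fiber_and_measure_pos hx
    rw [hcond]
    exact (hsi x hpos).1
  · obtain ⟨x, hx⟩ := exists_measure_preimage_singleton_ne_zero
      (IsProbabilityMeasure.ne_zero μ[|(f ∘ X) ⁻¹' {b}]) X
    obtain ⟨hcond, hpos⟩ := cond_cond_fiber_eq_cond_fiber_and_measure_pos hx
    have hpropensity : μ[T ⁻¹' {true} | (f ∘ X) ⁻¹' {b}] = μ[T ⁻¹' {true} | X ⁻¹' {x}] := by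
      rw [← hcond, hbalb.cond_preimage_apply .of_discrete (measurableSet_singleton x) hx
        (measurableSet_singleton true)]
    rw [hpropensity]
    exact (hsi x hpos).2

/-- Rosenbaum–Rubin: if treatment assignment is strongly ignorable given the covariates `X`,
and `B = f ∘ X` is a balancing score (within each group `B = b` the covariates `X` and the
treatment `T` are independent), then the treatment assignment is strongly ignorable within
each group defined by `B`. -/
theorem strong_ignorability_within_balanced_groups
    {Ω : Type*} [Fintype Ω] [MeasurableSpace Ω] [MeasurableSingletonClass Ω]
    {γ χ β : Type*} [MeasurableSpace γ] [MeasurableSingletonClass γ]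
    [MeasurableSpace χ] [MeasurableSingletonClass χ]
    [MeasurableSpace β] [MeasurableSingletonClass β]
    (μ : Measure Ω) [IsProbabilityMeasure μ]
    (T : Ω → Bool) (Y : Ω → γ) (X : Ω → χ) (f : χ → β)
    (B : Ω → β) (hB : B = f ∘ X)
    (hsi : ∀ x : χ, 0 < μ {ω | X ω = x} →
      IndepFun Y T (μ[|{ω | X ω = x}]) ∧
      0 < (μ[|{ω | X ω = x}]) {ω | T ω = true} ∧
      (μ[|{ω | X ω = x}]) {ω | T ω = true} < 1)
    (hbal : ∀ b : β, 0 < μ {ω | B ω = b} →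
      IndepFun X T (μ[|{ω | B ω = b}])) :
    ∀ b : β, 0 < μ {ω | B ω = b} →
      IndepFun Y T (μ[|{ω | B ω = b}]) ∧
      0 < (μ[|{ω | B ω = b}]) {ω | T ω = true} ∧
      (μ[|{ω | B ω = b}]) {ω | T ω = true} < 1 :=
  strong_ignorability_within_balanced_groups_general μ T Y X f B hB hsi hbal
end

section
/- Let (Ω, ℱ, μ) be a probability space, let T : Ω → ℝ be an integrable random variable, and let 𝔅, 𝔛, 𝔜 be sub-σ-algebras of ℱ with 𝔅 ≤ 𝔛. If the conditional expectation μ[T | 𝔜 ⊔ 𝔛] equals μ[T | 𝔛] almost everywhere, and μ[T | 𝔛] equals μ[T | 𝔅] almost everywhere, then μ[T | 𝔜 ⊔ 𝔅] equals μ[T | 𝔅] almost everywhere. -/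
open MeasureTheory

/-- Conditional-expectation form of the Rosenbaum–Rubin theorem: if
`μ[T | 𝔜 ⊔ 𝔛] =ᵐ[μ] μ[T | 𝔛]` (unconfoundedness given the covariates) and
`μ[T | 𝔛] =ᵐ[μ] μ[T | 𝔅]` (balance of the covariates given the balancing score `𝔅 ≤ 𝔛`),
then `μ[T | 𝔜 ⊔ 𝔅] =ᵐ[μ] μ[T | 𝔅]` (unconfoundedness given the balancing score). -/
theorem condexp_unconfounded_of_balancing
    {Ω : Type*} {mΩ : MeasurableSpace Ω} {μ : Measure Ω} [IsProbabilityMeasure μ]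
    (T : Ω → ℝ) (hT : Integrable T μ)
    (m𝔅 m𝔛 m𝔜 : MeasurableSpace Ω)
    (h𝔅 : m𝔅 ≤ mΩ) (h𝔛 : m𝔛 ≤ mΩ) (h𝔜 : m𝔜 ≤ mΩ)
    (h𝔅𝔛 : m𝔅 ≤ m𝔛)
    (h1 : μ[T | m𝔜 ⊔ m𝔛] =ᵐ[μ] μ[T | m𝔛])
    (h2 : μ[T | m𝔛] =ᵐ[μ] μ[T | m𝔅]) :
    μ[T | m𝔜 ⊔ m𝔅] =ᵐ[μ] μ[T | m𝔅] := by
  have hle : m𝔜 ⊔ m𝔅 ≤ m𝔜 ⊔ m𝔛 := sup_le_sup_left h𝔅𝔛 _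
  have hle' : m𝔜 ⊔ m𝔛 ≤ mΩ := sup_le h𝔜 h𝔛
  have tower : μ[μ[T | m𝔜 ⊔ m𝔛] | m𝔜 ⊔ m𝔅] =ᵐ[μ] μ[T | m𝔜 ⊔ m𝔅] :=
    condExp_condExp_of_le hle hle'
  have h3 : μ[T | m𝔜 ⊔ m𝔛] =ᵐ[μ] μ[T | m𝔅] := h1.trans h2
  have congr1 : μ[μ[T | m𝔜 ⊔ m𝔛] | m𝔜 ⊔ m𝔅] =ᵐ[μ] μ[μ[T | m𝔅] | m𝔜 ⊔ m𝔅] :=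
    condExp_congr_ae h3
  have fix : μ[μ[T | m𝔅] | m𝔜 ⊔ m𝔅] = μ[T | m𝔅] :=
    condExp_of_stronglyMeasurable (sup_le h𝔜 h𝔅)
      ((stronglyMeasurable_condExp (m := m𝔅)).mono le_sup_right)
      (integrable_condExp)
  exact tower.symm.trans (congr1.trans (by rw [fix]))
end

section
/- Let Ω be a finite probability space with probability measure μ (all subsets measurable), Y0, Y1 : Ω → ℝ random variables (the potential outcomes), T : Ω → Bool a treatment indicator, and B : Ω → β a grouping function with β finite. Assume that for every group b ∈ β with μ {B = b} > 0: (i) under the conditioned measure μ[·|{B = b}], the pair (Y0, Y1) and T are independent (IndepFun), and (ii) 0 < μ[{T = true} | {B = b}] < 1. Then the average treatment effect satisfies ∫ (Y1 − Y0) dμ = ∑_{b : μ{B=b}>0} μ {B = b} · ( E[Y1 | {T = true} ∩ {B = b}] − E[Y0 | {T = false} ∩ {B = b}] ). -/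
/-!
Decompose `μ` as the mixture `∑ b, μ {B = b} • μ[|B ← b]` of its group-conditional measures.
Inside a group, independence of `(Y0, Y1)` from `T` means that conditioning further on
`{T = t}` does not change the law of `Y0` or `Y1`, and overlap makes both events `{T = true}`
and `{T = false}` non-null, so the treated and control means are just the group means of `Y1`
and `Y0`.
-/

open MeasureTheory ProbabilityTheory

namespace ProbabilityTheory

variable {Ω : Type*} {mΩ : MeasurableSpace Ω}

theorem integral_eq_sum_measureReal_smul_integral_cond {E α : Type*} [NormedAddCommGroup E]
    [NormedSpace ℝ E] [Fintype α] [MeasurableSpace α] [DiscreteMeasurableSpace α]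
    {B : Ω → α} (hB : Measurable B) (μ : Measure Ω) [IsFiniteMeasure μ] {f : Ω → E}
    (hf : Integrable f μ) :
    ∫ ω, f ω ∂μ = ∑ b, μ.real (B ⁻¹' {b}) • ∫ ω, f ω ∂μ[|B ← b] := by
  have htotal := sum_meas_smul_cond_fiber hB μ
  rw [← htotal] at hf
  conv_lhs => rw [← htotal]
  rw [integral_finsetSum_measure (integrable_finsetSum_measure.1 hf)]
  simp only [integral_smul_measure, measureReal_def]

variable {γ δ : Type*} [MeasurableSpace γ] [MeasurableSpace δ] {ν : Measure Ω} [IsFiniteMeasure ν]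

theorem IndepFun.map_cond_preimage {X : Ω → γ} {T : Ω → δ} (hXT : IndepFun X T ν)
    (hX : Measurable X) (hT : Measurable T) {s : Set δ} (hs : MeasurableSet s)
    (hνs : ν (T ⁻¹' s) ≠ 0) :
    (ν[|T ⁻¹' s]).map X = ν.map X := by
  ext A hA
  rw [Measure.map_apply hX hA, Measure.map_apply hX hA, cond_apply (hT hs), Set.inter_comm,
    hXT.measure_inter_preimage_eq_mul A s hA hs, mul_comm, mul_assoc,
    ENNReal.mul_inv_cancel hνs (measure_ne_top ν _), mul_one]

theorem IndepFun.integral_cond_preimage {X : Ω → ℝ} {T : Ω → δ} (hXT : IndepFun X T ν)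
    (hX : Measurable X) (hT : Measurable T) {s : Set δ} (hs : MeasurableSet s)
    (hνs : ν (T ⁻¹' s) ≠ 0) :
    ∫ ω, X ω ∂ν[|T ⁻¹' s] = ∫ ω, X ω ∂ν := by
  calc ∫ ω, X ω ∂ν[|T ⁻¹' s] = ∫ x, x ∂(ν[|T ⁻¹' s]).map X :=
        (integral_map hX.aemeasurable aestronglyMeasurable_id).symm
    _ = ∫ x, x ∂ν.map X := by rw [hXT.map_cond_preimage hX hT hs hνs]
    _ = ∫ ω, X ω ∂ν := integral_map hX.aemeasurable aestronglyMeasurable_id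

theorem integral_sub_eq_integral_cond_true_sub_integral_cond_false {Y0 Y1 : Ω → ℝ}
    {T : Ω → Bool} (hindep : IndepFun (fun ω => (Y0 ω, Y1 ω)) T ν)
    (hY0 : Measurable Y0) (hY1 : Measurable Y1) (hY0i : Integrable Y0 ν)
    (hY1i : Integrable Y1 ν) (hT : Measurable T) (htrue : ν (T ⁻¹' {true}) ≠ 0)
    (hfalse : ν (T ⁻¹' {false}) ≠ 0) :
    ∫ ω, (Y1 ω - Y0 ω) ∂ν = ∫ ω, Y1 ω ∂ν[|T ← true] - ∫ ω, Y0 ω ∂ν[|T ← false] := by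
  have hY1T : IndepFun Y1 T ν := hindep.comp measurable_snd measurable_id
  have hY0T : IndepFun Y0 T ν := hindep.comp measurable_fst measurable_id
  rw [integral_sub hY1i hY0i,
    hY1T.integral_cond_preimage hY1 hT (measurableSet_singleton true) htrue,
    hY0T.integral_cond_preimage hY0 hT (measurableSet_singleton false) hfalse]

end ProbabilityTheory

open scoped Classical in
/-- Subclassification identity: if treatment assignment is strongly ignorable within each
group defined by `B` (within-group independence of the potential outcomes and the treatment,
and within-group overlap), then the average treatment effect is the group-probability-weighted
average of the within-group treated/control mean differences. -/
theorem ate_eq_subclassification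
    {Ω : Type*} [Fintype Ω] [MeasurableSpace Ω] [MeasurableSingletonClass Ω]
    {β : Type*} [Fintype β]
    (μ : Measure Ω) [IsProbabilityMeasure μ]
    (Y0 Y1 : Ω → ℝ) (T : Ω → Bool) (B : Ω → β)
    (hindep : ∀ b : β, 0 < μ {ω | B ω = b} →
      IndepFun (fun ω => (Y0 ω, Y1 ω)) T (μ[|{ω | B ω = b}]))
    (hoverlap : ∀ b : β, 0 < μ {ω | B ω = b} →
      0 < (μ[|{ω | B ω = b}]) {ω | T ω = true} ∧
      (μ[|{ω | B ω = b}]) {ω | T ω = true} < 1) :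
    ∫ ω, (Y1 ω - Y0 ω) ∂μ =
      ∑ b ∈ Finset.univ.filter (fun b : β => 0 < μ {ω | B ω = b}),
        (μ {ω | B ω = b}).toReal *
          ((∫ ω, Y1 ω ∂(μ[|{ω | T ω = true} ∩ {ω | B ω = b}])) -
            ∫ ω, Y0 ω ∂(μ[|{ω | T ω = false} ∩ {ω | B ω = b}])) := by
  let _ : MeasurableSpace β := ⊤
  rw [integral_eq_sum_measureReal_smul_integral_cond (.of_discrete : Measurable B) μ .of_finite,
    ← Finset.sum_filter_of_ne (p := fun b => 0 < μ {ω | B ω = b})]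
  swap
  · intro b _ hb
    exact pos_of_ne_zero ((measureReal_ne_zero_iff).1 (left_ne_zero_of_smul hb))
  refine Finset.sum_congr rfl fun b hb => ?_
  have hpos : 0 < μ {ω | B ω = b} := (Finset.mem_filter.1 hb).2
  set ν := μ[|{ω | B ω = b}]
  have : IsProbabilityMeasure ν := cond_isProbabilityMeasure hpos.ne'
  have hcond (t : Bool) : μ[|{ω | T ω = t} ∩ {ω | B ω = b}] = ν[|T ← t] := by
    rw [Set.inter_comm, cond_cond_eq_cond_inter .of_discrete .of_discrete]
    rfl
  have hfalse : ν (T ⁻¹' {false}) ≠ 0 := by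
    have hcompl : T ⁻¹' {false} = (T ⁻¹' {true})ᶜ := by ext ω; simp
    rw [hcompl, Ne, prob_compl_eq_zero_iff .of_discrete]
    exact (hoverlap b hpos).2.ne
  rw [smul_eq_mul, hcond, hcond, ← integral_sub_eq_integral_cond_true_sub_integral_cond_false
    (hindep b hpos) .of_discrete .of_discrete .of_finite .of_finite .of_discrete
    (hoverlap b hpos).1.ne' hfalse]
  rfl
end

section
/- Let V be a finite type, E : V → V → Prop a directed graph, and s, t ∈ V with s ≠ t. If there is a path from s to t in E (i.e., Relation.ReflTransGen E s t), then there exists a bijection f : V ≃ V such that for every x ∈ V at least one of the following holds: (x ∉ {s, t} and f x = x), or E x (f x), or (x = t and f x = s). (Concretely, for a repetition-free path P = s, x₁, …, x_m, t, the map sending s ↦ x₁, x₁ ↦ x₂, …, x_m ↦ t, t ↦ s, and fixing every vertex not on P, is such a bijection.) -/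
/-! Along a repetition-free path `s = x₀, x₁, …, xₘ = t` the cyclic permutation `List.formPerm`
sends each `xᵢ` to `xᵢ₊₁` across an edge and `t` back to `s`, and it fixes every vertex off the
path. -/

open List

theorem exists_nodup_isChain_cons_of_relationReflTransGen {α : Type*} {r : α → α → Prop}
    {a b : α} (h : Relation.ReflTransGen r a b) :
    ∃ l, IsChain r (a :: l) ∧ (a :: l).getLast (cons_ne_nil _ _) = b ∧ (a :: l).Nodup := by
  induction h using Relation.ReflTransGen.head_induction_on with
  | refl => exact ⟨[], .singleton _, rfl, nodup_singleton _⟩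
  | @head a c hac _ ih =>
    obtain ⟨l, hchain, hlast, hnodup⟩ := ih
    by_cases ha : a ∈ c :: l
    · -- the path from `c` already passes through `a`: keep only its part from `a` on
      obtain ⟨l₁, l₂, hsplit⟩ := append_of_mem ha
      simp only [hsplit, getLast_append_of_ne_nil _ (cons_ne_nil _ _)] at hchain hlast hnodup
      exact ⟨l₂, hchain.suffix (suffix_append _ _), hlast, hnodup.sublist (sublist_append_right _ _)⟩
    · exact ⟨c :: l, isChain_cons_cons.2 ⟨hac, hchain⟩, by rwa [getLast_cons (cons_ne_nil _ _)], nodup_cons.2 ⟨ha, hnodup⟩⟩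

theorem rel_formPerm_apply_or_of_mem {α : Type*} [DecidableEq α] {r : α → α → Prop} {a : α}
    {l : List α} (hchain : IsChain r (a :: l)) (hnodup : (a :: l).Nodup) {x : α}
    (hx : x ∈ a :: l) :
    r x (formPerm (a :: l) x) ∨
      (x = (a :: l).getLast (cons_ne_nil _ _) ∧ formPerm (a :: l) x = a) := by
  obtain ⟨i, hi, rfl⟩ := getElem_of_mem hx
  by_cases hlast : i + 1 < (a :: l).length
  · left
    rw [formPerm_apply_lt_getElem _ hnodup i hlast]
    exact isChain_iff_getElem.mp hchain i hlast
  · right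
    obtain rfl : i = (a :: l).length - 1 := by omega
    rw [← getLast_eq_getElem (cons_ne_nil _ _)]
    exact ⟨rfl, formPerm_apply_getLast a l⟩

theorem perfect_matching_of_reachable_general
    {V : Type*} (E : V → V → Prop) (s t : V)
    (hpath : Relation.ReflTransGen E s t) :
    ∃ f : V ≃ V, ∀ x : V,
      (x ∉ ({s, t} : Set V) ∧ f x = x) ∨ E x (f x) ∨ (x = t ∧ f x = s) := by
  classical
  obtain ⟨l, hchain, hlast, hnodup⟩ := exists_nodup_isChain_cons_of_relationReflTransGen hpath
  refine ⟨formPerm (s :: l), fun x => ?_⟩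
  by_cases hx : x ∈ s :: l
  · exact .inr (hlast ▸ rel_formPerm_apply_or_of_mem hchain hnodup hx)
  · have hs : s ∈ s :: l := mem_cons_self
    have ht : t ∈ s :: l := hlast ▸ getLast_mem _
    refine .inl ⟨?_, formPerm_apply_of_notMem hx⟩
    rintro (rfl | rfl) <;> contradiction

/-- Forward direction of the reduction from graph reachability to bipartite perfect matching:
if there is a path from `s` to `t` in the directed graph `E` (with `s ≠ t`, `V` finite), then
the associated bipartite graph (with edges `(x, x')` for `x ∉ {s, t}`, edges `(x, y')` for
`E x y`, and the edge `(t, s')`) has a perfect matching, i.e. a bijection `f : V ≃ V`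
such that every `x` is matched along one of these edges. -/
theorem perfect_matching_of_reachable
    {V : Type*} [Fintype V] (E : V → V → Prop) (s t : V) (hst : s ≠ t)
    (hpath : Relation.ReflTransGen E s t) :
    ∃ f : V ≃ V, ∀ x : V,
      (x ∉ ({s, t} : Set V) ∧ f x = x) ∨ E x (f x) ∨ (x = t ∧ f x = s) :=
  perfect_matching_of_reachable_general E s t hpath
end

section
/- Let R : Finset α be a relation with treatment indicator T : α → Bool, covariate map X_R : α → β, and key K_R : α → κ; let S : Finset γ be a relation with key K_S : γ → κ and covariate map X_S : γ → δ. Let the join R ⋈ S be the Finset of pairs (r, s) ∈ R ×ˢ S with K_R r = K_S s, with treatment (r,s) ↦ T r and covariates (r,s) ↦ (X_R r, X_S s). Then coarsened exact matching commutes with the join: CEM_{T∘fst, (X_R∘fst, X_S∘snd)}(R ⋈ S) = CEM_{T∘fst, (X_R∘fst, X_S∘snd)}( CEM_{T, X_R}(R) ⋈ S ), i.e., performing CEM on the join of the two relations gives the same result as first performing CEM on the base relation containing the treatment (with respect to its own covariates) and then performing CEM on the join of the result with the second relation. -/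
open Classical in
/-- Coarsened exact matching: `CEM T X R` retains the units `r ∈ R` whose group
`{r' ∈ R : X r' = X r}` contains at least one treated unit and at least one control unit. -/
noncomputable def CEM {α β : Type*} (T : α → Bool) (X : α → β) (R : Finset α) : Finset α :=
  R.filter (fun r =>
    (∃ r' ∈ R, X r' = X r ∧ T r' = true) ∧ (∃ r' ∈ R, X r' = X r ∧ T r' = false))

open Classical in
/-- The key/foreign-key join of two relations. -/
noncomputable def joinRel {α γ κ : Type*} (R : Finset α) (S : Finset γ)
    (K_R : α → κ) (K_S : γ → κ) : Finset (α × γ) :=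
  (R ×ˢ S).filter (fun p => K_R p.1 = K_S p.2)

/-!
If `(r, s)` survives CEM on the join, the first components of its treated and control witnesses
lie in the `X_R`-group of `r`, so `r` survives CEM on `R`, and so does the first component of
every pair with the same covariates as `(r, s)`. Hence joining with `CEM T X_R R` instead of `R`
removes neither a matched pair nor any of its witnesses.
-/

section CEM

variable {α β : Type*} {T : α → Bool} {X : α → β} {R : Finset α}

theorem mem_CEM {r : α} :
    r ∈ CEM T X R ↔ r ∈ R ∧
      (∃ r' ∈ R, X r' = X r ∧ T r' = true) ∧ (∃ r' ∈ R, X r' = X r ∧ T r' = false) := by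
  simp only [CEM, Finset.mem_filter]

theorem CEM_subset : CEM T X R ⊆ R :=
  fun _ hr => (mem_CEM.1 hr).1

theorem mem_CEM_of_covariates_eq {p q : α} (hp : p ∈ CEM T X R) (hq : q ∈ R) (hX : X q = X p) :
    q ∈ CEM T X R := by
  obtain ⟨-, ⟨a, ha, hXa, hTa⟩, ⟨c, hc, hXc, hTc⟩⟩ := mem_CEM.1 hp
  exact mem_CEM.2 ⟨hq, ⟨a, ha, hXa.trans hX.symm, hTa⟩, ⟨c, hc, hXc.trans hX.symm, hTc⟩⟩

theorem map_mem_CEM {α' β' : Type*} {T' : α' → Bool} {X' : α' → β'} {R' : Finset α'}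
    (f : α → α') (hf : ∀ a ∈ R, f a ∈ R') (hX : ∀ a b, X a = X b → X' (f a) = X' (f b))
    {p : α} (hp : p ∈ CEM (fun a => T' (f a)) X R) : f p ∈ CEM T' X' R' := by
  obtain ⟨hpR, ⟨a, ha, hXa, hTa⟩, ⟨c, hc, hXc, hTc⟩⟩ := mem_CEM.1 hp
  exact mem_CEM.2 ⟨hf p hpR, ⟨f a, hf a ha, hX a p hXa, hTa⟩, ⟨f c, hf c hc, hX c p hXc, hTc⟩⟩

theorem CEM_filter_eq_of_forall {P : α → Prop} [DecidablePred P]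
    (hP : ∀ p ∈ CEM T X R, ∀ q ∈ R, X q = X p → P q) :
    CEM T X (R.filter P) = CEM T X R := by
  ext p
  simp only [mem_CEM, Finset.mem_filter]
  constructor
  · rintro ⟨⟨hpR, -⟩, ⟨a, ⟨ha, -⟩, hXa, hTa⟩, ⟨c, ⟨hc, -⟩, hXc, hTc⟩⟩
    exact ⟨hpR, ⟨a, ha, hXa, hTa⟩, ⟨c, hc, hXc, hTc⟩⟩
  · intro hp
    have hpCEM : p ∈ CEM T X R := mem_CEM.2 hp
    obtain ⟨hpR, ⟨a, ha, hXa, hTa⟩, ⟨c, hc, hXc, hTc⟩⟩ := hp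
    exact ⟨⟨hpR, hP p hpCEM p hpR rfl⟩, ⟨a, ⟨ha, hP p hpCEM a ha hXa⟩, hXa, hTa⟩,
      ⟨c, ⟨hc, hP p hpCEM c hc hXc⟩, hXc, hTc⟩⟩

end CEM

section joinRel

variable {α γ κ : Type*} {R : Finset α} {S : Finset γ} {K_R : α → κ} {K_S : γ → κ}

theorem mem_joinRel {p : α × γ} :
    p ∈ joinRel R S K_R K_S ↔ (p.1 ∈ R ∧ p.2 ∈ S) ∧ K_R p.1 = K_S p.2 := by
  simp only [joinRel, Finset.mem_filter, Finset.mem_product]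

theorem joinRel_eq_filter_of_subset {R' : Finset α} (h : R' ⊆ R) [DecidablePred (· ∈ R')] :
    joinRel R' S K_R K_S = (joinRel R S K_R K_S).filter (fun p => p.1 ∈ R') := by
  ext p
  simp only [mem_joinRel, Finset.mem_filter]
  exact ⟨fun ⟨⟨hr, hs⟩, hk⟩ => ⟨⟨⟨h hr, hs⟩, hk⟩, hr⟩, fun ⟨⟨⟨_, hs⟩, hk⟩, hr⟩ => ⟨⟨hr, hs⟩, hk⟩⟩

end joinRel

/-- Coarsened exact matching can be pushed down to the base relations of a normalized
database: performing CEM on the join `R ⋈ S` equals first performing CEM on the base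
relation `R` containing the treatment (with respect to its own covariates `X_R`) and then
performing CEM on the join of the result with `S`. -/
theorem cem_pushdown
    {α γ κ β δ : Type*}
    (R : Finset α) (T : α → Bool) (X_R : α → β) (K_R : α → κ)
    (S : Finset γ) (K_S : γ → κ) (X_S : γ → δ) :
    CEM (fun p => T p.1) (fun p => (X_R p.1, X_S p.2)) (joinRel R S K_R K_S) =
      CEM (fun p => T p.1) (fun p => (X_R p.1, X_S p.2))
        (joinRel (CEM T X_R R) S K_R K_S) := by
  classical
  rw [joinRel_eq_filter_of_subset CEM_subset, CEM_filter_eq_of_forall]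
  intro p hp q hq hX
  have hfst : p.1 ∈ CEM T X_R R :=
    map_mem_CEM (X' := X_R) Prod.fst (fun a ha => (mem_joinRel.1 ha).1.1)
      (fun _ _ h => congrArg Prod.fst h) hp
  exact mem_CEM_of_covariates_eq hfst (mem_joinRel.1 hq).1.1 (congrArg Prod.fst hX)
end

section
/- Let R : Finset α be a relation with treatment indicator T : α → Bool and covariate map X : α → β, and let g : α → γ be a coarser grouping map, i.e., for all r, r' ∈ α, X r = X r' implies g r = g r'. Let P be the Finset of units r ∈ R such that the coarse group {r' ∈ R : g r' = g r} contains at least one treated unit and at least one control unit. Then CEM_{T,X}(R) = CEM_{T,X}(P): pruning all units whose coarse group fails the overlap condition does not change the result of coarsened exact matching on the fine covariates. -/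
open Classical in
/-- Pruning all units whose coarse group (with respect to a grouping map `g` coarser than the
covariates `X`) fails the overlap condition does not change the result of coarsened exact
matching on the fine covariates `X`. -/
theorem cem_prune_coarse
    {α β γ : Type*}
    (R : Finset α) (T : α → Bool) (X : α → β) (g : α → γ)
    (hcoarse : ∀ r r' : α, X r = X r' → g r = g r')
    (P : Finset α)
    (hP : P = R.filter (fun r =>
      (∃ r' ∈ R, g r' = g r ∧ T r' = true) ∧ (∃ r' ∈ R, g r' = g r ∧ T r' = false))) :
    CEM T X R = CEM T X P := by
  subst hP
  ext r
  simp only [CEM, Finset.mem_filter]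
  constructor
  · rintro ⟨hr, ⟨t, ht, hXt, hTt⟩, ⟨c, hc, hXc, hTc⟩⟩
    have hgt : g t = g r := hcoarse _ _ hXt
    have hgc : g c = g r := hcoarse _ _ hXc
    have hco : ∀ s : α, g s = g r → (∃ r' ∈ R, g r' = g s ∧ T r' = true) ∧
        (∃ r' ∈ R, g r' = g s ∧ T r' = false) := fun s hs =>
      ⟨⟨t, ht, by rw [hgt, hs], hTt⟩, ⟨c, hc, by rw [hgc, hs], hTc⟩⟩
    exact ⟨⟨hr, hco r rfl⟩,
      ⟨t, ⟨ht, hco t hgt⟩, hXt, hTt⟩,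
      ⟨c, ⟨hc, hco c hgc⟩, hXc, hTc⟩⟩
  · rintro ⟨⟨hr, -⟩, ⟨t, ⟨ht, -⟩, hXt, hTt⟩, ⟨c, ⟨hc, -⟩, hXc, hTc⟩⟩
    exact ⟨hr, ⟨t, ht, hXt, hTt⟩, ⟨c, hc, hXc, hTc⟩⟩
end

section
/- Let R : Finset α be a relation, let I be a finite index set of treatments, and for each i ∈ I let T_i : α → Bool be a treatment indicator with covariate map X_i : α → β_i. Let X' : α → γ be a shared covariate map that is coarser than every X_i, i.e., for every i ∈ I and all r, r' ∈ α, X_i r = X_i r' implies X' r = X' r'. Define the covariate-factoring result P as the Finset of units r ∈ R such that for at least one i ∈ I, the shared-covariate group {r' ∈ R : X' r' = X' r} contains at least one unit with T_i = true and at least one unit with T_i = false. Then for every i ∈ I, CEM_{T_i, X_i}(P) = CEM_{T_i, X_i}(R): coarsened exact matching for each individual treatment performed on the covariate-factored data coincides with coarsened exact matching performed directly on R. -/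
open Classical in
/-- Covariate factoring: if `X'` is a shared covariate map coarser than every treatment's
covariates `X i`, and `P` retains exactly the units of `R` whose `X'`-group satisfies the
overlap condition for at least one treatment, then coarsened exact matching for each
individual treatment on `P` coincides with coarsened exact matching on `R`. -/
theorem cem_covariate_factoring
    {α γ : Type*} {ι : Type*} [Fintype ι] {β : ι → Type*}
    (R : Finset α) (T : ι → α → Bool) (X : (i : ι) → α → β i) (X' : α → γ)
    (hcoarse : ∀ (i : ι) (r r' : α), X i r = X i r' → X' r = X' r')
    (P : Finset α)
    (hP : P = R.filter (fun r => ∃ i : ι,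
      (∃ r' ∈ R, X' r' = X' r ∧ T i r' = true) ∧
      (∃ r' ∈ R, X' r' = X' r ∧ T i r' = false))) :
    ∀ i : ι, CEM (T i) (X i) P = CEM (T i) (X i) R := by
  intro i
  have hPR : P ⊆ R := by
    subst hP; exact Finset.filter_subset _ _
  ext r
  simp only [CEM, Finset.mem_filter]
  constructor
  · rintro ⟨hrP, ⟨t, htP, htX, htT⟩, ⟨c, hcP, hcX, hcT⟩⟩
    exact ⟨hPR hrP, ⟨t, hPR htP, htX, htT⟩, ⟨c, hPR hcP, hcX, hcT⟩⟩
  · rintro ⟨hrR, ⟨t, htR, htX, htT⟩, ⟨c, hcR, hcX, hcT⟩⟩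
    have htX' : X' t = X' r := hcoarse i _ _ htX
    have hcX' : X' c = X' r := hcoarse i _ _ hcX
    have mem : ∀ s : α, s ∈ R → X' s = X' r → s ∈ P := by
      intro s hsR hsX'
      subst hP
      refine Finset.mem_filter.mpr ⟨hsR, ⟨i, ⟨t, htR, by rw [htX', hsX'], htT⟩,
        ⟨c, hcR, by rw [hcX', hsX'], hcT⟩⟩⟩
    exact ⟨mem r hrR rfl, ⟨t, mem t htR htX', htX, htT⟩, ⟨c, mem c hcR hcX', hcX, hcT⟩⟩
end
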